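/- For the BPS Skyrme model with potential U(η) = η (β = 1), the solution of η_z = −√(η + P̃) with η(0) = π/2 reaching η(Z) = 0 has Z(P̃) = 2(√(π/2 + P̃) − √P̃) for P̃ ≥ 0, and the equation of state is P̃ = (2π − Ṽ²)²/(16Ṽ²) with Ṽ = Z. Consequently dZ/dP̃ → −∞ as P̃ → 0⁺, i.e., the compressibility at zero pressure is infinite. -/

import Mathlib

/-!
Along a solution, `√(η + P̃) + z/2` is a first integral (its derivative is
`-√(η + P̃) / (2√(η + P̃)) + 1/2 = 0` wherever `η + P̃ > 0`), so comparing `z = 0` with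
`z = Z` gives `Z/2 = √(π/2 + P̃) - √P̃`. Squaring `Z/2 + √P̃ = √(π/2 + P̃)` solves for `√P̃`,
which is the equation of state. Finally `dZ/dP̃ = (√(π/2 + P̃))⁻¹ - (√P̃)⁻¹`, whose second
term blows up at `P̃ = 0`.
-/

open Real Filter Set Topology

lemma hasDerivAt_sqrt_add_half {u : ℝ → ℝ} {z : ℝ} (hu : HasDerivAt u (-√(u z)) z)
    (hz : 0 < u z) : HasDerivAt (fun x => √(u x) + x / 2) 0 z := by
  have hsqrt : √(u z) ≠ 0 := (sqrt_pos.2 hz).ne'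
  refine ((hu.sqrt hz.ne').add ((hasDerivAt_id z).div_const 2)).congr_deriv ?_
  field_simp
  ring

lemma sqrt_add_half_eq_of_hasDerivAt_neg_sqrt {u : ℝ → ℝ} {a b : ℝ} (hab : a ≤ b)
    (hu : ∀ z ∈ Icc a b, HasDerivAt u (-√(u z)) z) (hpos : ∀ z ∈ Ico a b, 0 < u z) :
    √(u b) + b / 2 = √(u a) + a / 2 := by
  have hcont : ContinuousOn (fun x => √(u x) + x / 2) (Icc a b) := fun z hz =>
    ((hu z hz).continuousAt.sqrt.add (continuousAt_id.div_const 2)).continuousWithinAt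
  refine constant_of_has_deriv_right_zero hcont (fun z hz => ?_) b ⟨hab, le_rfl⟩
  exact (hasDerivAt_sqrt_add_half (hu z (Ico_subset_Icc_self hz)) (hpos z hz)).hasDerivWithinAt

lemma eq_sq_div_of_eq_two_mul_sqrt_add_sub_sqrt {c P V : ℝ} (hc : 0 ≤ c) (hP : 0 ≤ P)
    (hV : V ≠ 0) (h : V = 2 * (√(c + P) - √P)) :
    P = (4 * c - V ^ 2) ^ 2 / (16 * V ^ 2) := by
  have hsq : (V / 2 + √P) ^ 2 = c + P := by
    rw [show V / 2 + √P = √(c + P) by linarith, sq_sqrt (by linarith)]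
  have hroot : √P = (4 * c - V ^ 2) / (4 * V) := by
    field_simp
    nlinarith [sq_sqrt hP]
  rw [← sq_sqrt hP, hroot, div_pow]
  ring

lemma hasDerivAt_two_mul_sqrt_add_sub_sqrt {c p : ℝ} (hp : p ≠ 0) (hcp : c + p ≠ 0) :
    HasDerivAt (fun q => 2 * (√(c + q) - √q)) ((√(c + p))⁻¹ - (√p)⁻¹) p := by
  refine ((((hasDerivAt_id p).const_add c).sqrt hcp).sub (hasDerivAt_sqrt hp)).const_mul 2
    |>.congr_deriv ?_
  simp only [id, one_div, mul_inv]
  ring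

lemma tendsto_inv_sqrt_nhdsGT_zero : Tendsto (fun p : ℝ => (√p)⁻¹) (𝓝[>] 0) atTop := by
  refine tendsto_inv_nhdsGT_zero.comp (tendsto_nhdsWithin_of_tendsto_nhds_of_eventually_within _
    ?_ ?_)
  · simpa using continuous_sqrt.tendsto 0 |>.mono_left nhdsWithin_le_nhds
  · filter_upwards [self_mem_nhdsWithin] with p hp using sqrt_pos.2 hp

lemma tendsto_deriv_two_mul_sqrt_add_sub_sqrt {c : ℝ} (hc : 0 < c) :
    Tendsto (deriv fun q => 2 * (√(c + q) - √q)) (𝓝[>] 0) atBot := by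
  have hderiv : (fun p => (√(c + p))⁻¹ - (√p)⁻¹) =ᶠ[𝓝[>] 0]
      deriv fun q => 2 * (√(c + q) - √q) := by
    filter_upwards [self_mem_nhdsWithin] with p (hp : 0 < p)
    exact (hasDerivAt_two_mul_sqrt_add_sub_sqrt hp.ne' (by linarith)).deriv.symm
  refine Tendsto.congr' hderiv (Tendsto.add_atBot (C := (√c)⁻¹) ?_
    (tendsto_neg_atTop_atBot.comp tendsto_inv_sqrt_nhdsGT_zero))
  have hcont : ContinuousAt (fun p => (√(c + p))⁻¹) 0 :=
    (continuous_sqrt.continuousAt.comp (continuousAt_const.add continuousAt_id)).inv₀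
      (by simpa using (sqrt_pos.2 hc).ne')
  simpa using hcont.tendsto.mono_left nhdsWithin_le_nhds

/-- For the potential `U(η) = η` (β = 1), any solution of
`η_z = −√(η + P̃)` with `η(0) = π/2`, `η > 0` before reaching `η(Z) = 0`, has
`Z = 2(√(π/2 + P̃) − √P̃)` for `P̃ ≥ 0`; the equation of state is
`P̃ = (2π − Ṽ²)²/(16Ṽ²)` with `Ṽ = Z`; and `dZ/dP̃ → −∞` as `P̃ → 0⁺`
(infinite compressibility at zero pressure). -/
theorem stmt_14 (P : ℝ) (hP : 0 ≤ P) (η : ℝ → ℝ) (Z : ℝ) (hZpos : 0 < Z)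
    (hODE : ∀ z ∈ Set.Icc (0 : ℝ) Z, HasDerivAt η (-Real.sqrt (η z + P)) z)
    (h0 : η 0 = π / 2) (hZ : η Z = 0)
    (hpos : ∀ z, 0 ≤ z → z < Z → 0 < η z)
    (Zf : ℝ → ℝ)
    (hZf : ∀ p : ℝ, Zf p = 2 * (Real.sqrt (π / 2 + p) - Real.sqrt p)) :
    Z = 2 * (Real.sqrt (π / 2 + P) - Real.sqrt P) ∧
    P = (2 * π - Z ^ 2) ^ 2 / (16 * Z ^ 2) ∧
    Tendsto (fun p => deriv Zf p) (nhdsWithin 0 (Set.Ioi 0)) atBot := by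
  have hZeq : Z = 2 * (√(π / 2 + P) - √P) := by
    have h := sqrt_add_half_eq_of_hasDerivAt_neg_sqrt (u := fun z => η z + P) hZpos.le
      (fun z hz => (hODE z hz).add_const P) fun z hz => by linarith [hpos z hz.1 hz.2]
    simp only [h0, hZ, zero_add, zero_div, add_zero] at h
    linarith
  refine ⟨hZeq, ?_, ?_⟩
  · convert eq_sq_div_of_eq_two_mul_sqrt_add_sub_sqrt (by positivity) hP hZpos.ne' hZeq using 3
    ring
  · rw [show Zf = fun q => 2 * (√(π / 2 + q) - √q) from funext hZf]
    exact tendsto_deriv_two_mul_sqrt_add_sub_sqrt (by positivity)
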